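/- Let T ⊂ ℤ¹⁶ be the set consisting of the vectors e₀ − e₁ − e₁₀ − e₁₁ − e₁₂ − e₁₃ − e₁₄ − e₁₅ − eᵢ (2 ≤ i ≤ 6), e₀ − eᵢ − e_j (2 ≤ i < j ≤ 6), eᵢ − e₁ − e₁₀ − e₁₁ − e₁₂ − e₁₃ − e₁₄ − e₁₅ (2 ≤ i ≤ 6), and eᵢ − e_j (2 ≤ i, j ≤ 6, i ≠ j), and equip ℤ¹⁶ with the form ⟨x,y⟩ = −Σᵢ xᵢyᵢ. Then: (a) there is no 6-tuple (v₁,…,v₆) ∈ T⁶ with ⟨v₁,v₁⟩ = −9, ⟨vᵢ,vᵢ⟩ = −2 for 2 ≤ i ≤ 6, ⟨vᵢ,vᵢ₊₁⟩ = 1 for 1 ≤ i ≤ 5, and ⟨vᵢ,v_j⟩ = 0 whenever |i−j| ≥ 2; (b) there is no 6-tuple (v₁,…,v₆) ∈ T⁶ with self-pairings (⟨v₁,v₁⟩,…,⟨v₆,v₆⟩) = (−2,−8,−2,−2,−2,−3), ⟨vᵢ,vᵢ₊₁⟩ = 1 for 1 ≤ i ≤ 5, and ⟨vᵢ,v_j⟩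 = 0 whenever |i−j| ≥ 2. -/

import Mathlib

/-- The standard basis vector `eᵢ` of `ℤ¹⁶`. -/
def E16 (i : Fin 16) : Fin 16 → ℤ := Pi.single i 1

/-- The negative definite form `⟨x,y⟩ = −Σᵢ xᵢyᵢ` on `ℤ¹⁶`. -/
def F16 (x y : Fin 16 → ℤ) : ℤ := -∑ i : Fin 16, x i * y i

/-- The set `T` of classes in the filling `W₆` representable by symplectic spheres. -/
def W6classes : Set (Fin 16 → ℤ) :=
  {v | (∃ i : Fin 16, 2 ≤ i ∧ i ≤ 6 ∧
          v = E16 0 - E16 1 - E16 10 - E16 11 - E16 12 - E16 13 - E16 14 - E16 15 - E16 i) ∨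
       (∃ i j : Fin 16, 2 ≤ i ∧ i < j ∧ j ≤ 6 ∧ v = E16 0 - E16 i - E16 j) ∨
       (∃ i : Fin 16, 2 ≤ i ∧ i ≤ 6 ∧
          v = E16 i - E16 1 - E16 10 - E16 11 - E16 12 - E16 13 - E16 14 - E16 15) ∨
       (∃ i j : Fin 16, 2 ≤ i ∧ i ≤ 6 ∧ 2 ≤ j ∧ j ≤ 6 ∧ i ≠ j ∧ v = E16 i - E16 j)}

/-! In `T` the self-pairing determines the shape of a class: `-2` forces a root `e_a - e_b` with
`a, b ∈ {2, …, 6}`, and `-8` a class whose restriction to `{2, …, 6}` is some `e_k`.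

(a) The classes `v₂, …, v₆` would form an `A₅` chain of roots. Such a chain of `n` roots uses
`n + 1` distinct indices, and only five are available.

(b) Pairing `1` with the class `v₂` forces both `v₁` and `v₃` to be roots `e_a - e_k`, and two such
roots are never orthogonal. -/

def root {ι : Type*} [DecidableEq ι] (a b : ι) : ι → ℤ := Pi.single a 1 - Pi.single b 1

section Roots

variable {ι : Type*} [DecidableEq ι]

theorem root_apply (a b c : ι) :
    root a b c = (if c = a then 1 else 0) - (if c = b then 1 else 0) := by
  simp [root, Pi.single_apply]

variable [Fintype ι]

theorem dotProduct_root (w : ι → ℤ) (a b : ι) : w ⬝ᵥ root a b = w a - w b := by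
  simp [root, dotProduct_sub]

theorem eq_of_dotProduct_root_eq_neg_one {s : Finset ι} {w : ι → ℤ} {k p q : ι}
    (hw : ∀ x ∈ s, w x = if x = k then 1 else 0) (hp : p ∈ s) (hq : q ∈ s)
    (h : w ⬝ᵥ root p q = -1) : q = k := by
  rw [dotProduct_root, hw p hp, hw q hq] at h
  split_ifs at h <;> simp_all

theorem root_disjoint_of_dotProduct_eq_zero {a b c d : ι} (hab : a ≠ b) (hcd : c ≠ d)
    (h : root a b ⬝ᵥ root c d = 0) : a ≠ c ∧ a ≠ d ∧ b ≠ c ∧ b ≠ d := by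
  rw [dotProduct_root, root_apply, root_apply] at h
  refine ⟨?_, ?_, ?_, ?_⟩ <;> rintro rfl <;> split_ifs at h <;> simp_all

theorem root_not_subset_of_dotProduct_eq_neg_one {a b c d : ι} (hab : a ≠ b) (hcd : c ≠ d)
    (h : root a b ⬝ᵥ root c d = -1) : (a ≠ c ∧ a ≠ d) ∨ (b ≠ c ∧ b ≠ d) := by
  rw [dotProduct_root, root_apply, root_apply] at h
  by_contra h'
  obtain ⟨rfl | rfl, rfl | rfl⟩ : (a = c ∨ a = d) ∧ (b = c ∨ b = d) := by tauto
  all_goals split_ifs at h <;> simp_all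

theorem lt_card_of_root_chain {n : ℕ} {s : Finset ι} (r : Fin (n + 1) → ι → ℤ)
    (hr : ∀ i, ∃ a ∈ s, ∃ b ∈ s, a ≠ b ∧ r i = root a b)
    (hadj : ∀ i : Fin n, r i.castSucc ⬝ᵥ r i.succ = -1)
    (hfar : ∀ i j : Fin (n + 1), (i : ℕ) + 2 ≤ j → r i ⬝ᵥ r j = 0) :
    n + 1 < s.card := by
  induction n generalizing s with
  | zero =>
    obtain ⟨a, ha, b, hb, hab, -⟩ := hr 0
    exact Finset.one_lt_card.mpr ⟨a, ha, b, hb, hab⟩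
  | succ n ih =>
    obtain ⟨a₀, ha₀, b₀, hb₀, hab₀, hr₀⟩ := hr 0
    obtain ⟨a₁, ha₁, b₁, hb₁, hab₁, hr₁⟩ := hr 1
    -- an index of the first root missed by the second is missed by all later roots too
    obtain ⟨x, hxs, hx₀, hxa₁, hxb₁⟩ : ∃ x ∈ s, (x = a₀ ∨ x = b₀) ∧ x ≠ a₁ ∧ x ≠ b₁ := by
      rcases root_not_subset_of_dotProduct_eq_neg_one hab₀ hab₁ (hr₀ ▸ hr₁ ▸ hadj 0) with h | h
      · exact ⟨a₀, ha₀, .inl rfl, h⟩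
      · exact ⟨b₀, hb₀, .inr rfl, h⟩
    have hrest (i : Fin (n + 1)) :
        ∃ c ∈ s.erase x, ∃ d ∈ s.erase x, c ≠ d ∧ r i.succ = root c d := by
      cases i using Fin.cases with
      | zero => exact ⟨a₁, Finset.mem_erase.mpr ⟨hxa₁.symm, ha₁⟩,
          b₁, Finset.mem_erase.mpr ⟨hxb₁.symm, hb₁⟩, hab₁, hr₁⟩
      | succ i =>
        obtain ⟨c, hc, d, hd, hcd, hri⟩ := hr i.succ.succ
        have := root_disjoint_of_dotProduct_eq_zero hab₀ hcd
          (hr₀ ▸ hri ▸ hfar 0 i.succ.succ (by simp))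
        have hxc : c ≠ x := by rcases hx₀ with rfl | rfl <;> tauto
        have hxd : d ≠ x := by rcases hx₀ with rfl | rfl <;> tauto
        exact ⟨c, Finset.mem_erase.mpr ⟨hxc, hc⟩, d, Finset.mem_erase.mpr ⟨hxd, hd⟩, hcd, hri⟩
    have key := ih (s := s.erase x) (fun i => r i.succ) hrest
      (fun i => by rw [Fin.succ_castSucc]; exact hadj i.succ)
      (fun i j hij => hfar i.succ j.succ (by simpa using hij))
    rw [Finset.card_erase_of_mem hxs] at key
    omega

end Roots

theorem F16_eq_neg_dotProduct (x y : Fin 16 → ℤ) : F16 x y = -(x ⬝ᵥ y) := rfl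

theorem exists_root_of_mem_W6classes {v : Fin 16 → ℤ} (hv : v ∈ W6classes)
    (h : F16 v v = -2) :
    ∃ a ∈ Finset.Icc (2 : Fin 16) 6, ∃ b ∈ Finset.Icc (2 : Fin 16) 6, a ≠ b ∧ v = root a b := by
  rcases hv with ⟨i, hi₁, hi₂, rfl⟩ | ⟨i, j, hi, hij, hj, rfl⟩ | ⟨i, hi₁, hi₂, rfl⟩ |
    ⟨i, j, hi₁, hi₂, hj₁, hj₂, hij, rfl⟩
  · revert i h; decide
  · revert i j h; decide
  · revert i h; decide
  · exact ⟨i, Finset.mem_Icc.mpr ⟨hi₁, hi₂⟩, j, Finset.mem_Icc.mpr ⟨hj₁, hj₂⟩, hij, rfl⟩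

theorem exists_indicator_of_mem_W6classes {v : Fin 16 → ℤ} (hv : v ∈ W6classes)
    (h : F16 v v = -8) :
    ∃ k ∈ Finset.Icc (2 : Fin 16) 6, ∀ p ∈ Finset.Icc (2 : Fin 16) 6,
      v p = if p = k then 1 else 0 := by
  rcases hv with ⟨i, hi₁, hi₂, rfl⟩ | ⟨i, j, hi, hij, hj, rfl⟩ | ⟨i, hi₁, hi₂, rfl⟩ |
    ⟨i, j, hi₁, hi₂, hj₁, hj₂, hij, rfl⟩
  · revert i h; decide
  · revert i j h; decide
  · exact ⟨i, Finset.mem_Icc.mpr ⟨hi₁, hi₂⟩, by revert i h; decide⟩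
  · revert i j h; decide

/-- No chain of classes in `T` realizes the intersection pattern of the linear plumbings
`(−9,−2,−2,−2,−2,−2)` or `(−2,−8,−2,−2,−2,−3)`. -/
theorem stmt_11 :
    (¬ ∃ v : Fin 6 → (Fin 16 → ℤ),
        (∀ i, v i ∈ W6classes) ∧
        F16 (v 0) (v 0) = -9 ∧
        (∀ i : Fin 6, i ≠ 0 → F16 (v i) (v i) = -2) ∧
        (∀ i : Fin 5, F16 (v i.castSucc) (v i.succ) = 1) ∧
        (∀ i j : Fin 6, ((i : ℕ) + 2 ≤ (j : ℕ) ∨ (j : ℕ) + 2 ≤ (i : ℕ)) →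
          F16 (v i) (v j) = 0)) ∧
    (¬ ∃ v : Fin 6 → (Fin 16 → ℤ),
        (∀ i, v i ∈ W6classes) ∧
        (∀ i : Fin 6, F16 (v i) (v i) = ![(-2 : ℤ), -8, -2, -2, -2, -3] i) ∧
        (∀ i : Fin 5, F16 (v i.castSucc) (v i.succ) = 1) ∧
        (∀ i j : Fin 6, ((i : ℕ) + 2 ≤ (j : ℕ) ∨ (j : ℕ) + 2 ≤ (i : ℕ)) →
          F16 (v i) (v j) = 0)) := by
  constructor
  · rintro ⟨v, hmem, -, hsq, hadj, hfar⟩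
    have := lt_card_of_root_chain (n := 4) (s := Finset.Icc (2 : Fin 16) 6) (fun i => v i.succ)
      (fun i => exists_root_of_mem_W6classes (hmem _) (hsq _ i.succ_ne_zero))
      (fun i => by
        have := hadj i.succ
        rw [F16_eq_neg_dotProduct, ← Fin.succ_castSucc] at this
        omega)
      (fun i j hij => by
        have := hfar i.succ j.succ (.inl (by simpa using hij))
        rw [F16_eq_neg_dotProduct] at this
        omega)
    simp at this
  · rintro ⟨v, hmem, hsq, hadj, hfar⟩
    obtain ⟨p, hp, q, hq, hpq, hv₀⟩ := exists_root_of_mem_W6classes (hmem 0) (hsq 0)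
    obtain ⟨k, -, hv₁⟩ := exists_indicator_of_mem_W6classes (hmem 1) (hsq 1)
    obtain ⟨c, hc, d, hd, hcd, hv₂⟩ := exists_root_of_mem_W6classes (hmem 2) (hsq 2)
    have hqk : q = k := by
      have h01 := hadj 0
      simp only [Fin.castSucc_zero, Fin.succ_zero_eq_one, F16_eq_neg_dotProduct, hv₀] at h01
      rw [dotProduct_comm] at h01
      exact eq_of_dotProduct_root_eq_neg_one hv₁ hp hq (by omega)
    have hdk : d = k := by
      have h12 := hadj 1
      simp only [Fin.castSucc_one, Fin.succ_one_eq_two, F16_eq_neg_dotProduct, hv₂] at h12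
      exact eq_of_dotProduct_root_eq_neg_one hv₁ hc hd (by omega)
    have h02 := hfar 0 2 (.inl le_rfl)
    rw [F16_eq_neg_dotProduct, hv₀, hv₂, neg_eq_zero] at h02
    exact (root_disjoint_of_dotProduct_eq_zero hpq hcd h02).2.2.2 (hqk.trans hdk.symm)
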